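/- arXiv:1506.08030 — 3 statements merged into one kernel-verified Lean document; each statement's English description precedes it below -/
import Mathlib

section
/- P_K(c) = Σ over worlds W with O_W ⊨ c of P_B(W); that is, the infimum over all models p of the knowledge base K = (P_B, 𝕊) of P_p(c) equals the total P_B-probability of the worlds W whose induced ontology O_W entails c. -/
/-! Every model `q` of the knowledge base projects onto `P_B` along `Prod.snd` and is supported
on pairs `(i, W)` with `i ⊨ O_W`, so on each world `W` with `O_W ⊨ c` all of its mass
`P_B(W)` lies on interpretations satisfying `c`. The bound is attained by the model that puts
mass `P_B(W)` on a single pair `(i_W, W)`, where `i_W ⊨ O_W` is chosen to falsify `c`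
whenever `O_W ⊭ c`. -/

open scoped ENNReal

namespace BL

variable {I A C V : Type*}

/-- A world `W` satisfies the context `κ` if it agrees with `κ` wherever it is defined. -/
def SatCtx (W : V → Bool) (κ : V → Option Bool) : Prop :=
  ∀ v b, κ v = some b → W v = b

/-- The ontology induced by the world `W` from the `V`-ontology `𝕊`. -/
def OW (𝕊 : Finset (A × (V → Option Bool))) (W : V → Bool) : Set A :=
  {α | ∃ κ, (α, κ) ∈ 𝕊 ∧ SatCtx W κ}

/-- `i` is a model of the ontology `O`. -/
def IsOntModel (satA : I → A → Prop) (O : Set A) (i : I) : Prop :=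
  ∀ α ∈ O, satA i α

/-- The ontology `O` entails the consequence `c`. -/
def Entails (satA : I → A → Prop) (satC : I → C → Prop) (O : Set A) (c : C) : Prop :=
  ∀ i : I, IsOntModel satA O i → satC i c

/-- A probabilistic interpretation `p` (a finitely supported PMF on pairs of an
interpretation and a world) is a model of the knowledge base `(PB, 𝕊)`. -/
def IsKBModel (satA : I → A → Prop) (PB : PMF (V → Bool))
    (𝕊 : Finset (A × (V → Option Bool))) (p : PMF (I × (V → Bool))) : Prop :=
  p.support.Finite ∧
    (∀ iW ∈ p.support, IsOntModel satA (OW 𝕊 iW.2) iW.1) ∧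
    ∀ W : V → Bool, ∑' i : I, p (i, W) = PB W

/-- `P_p(c)`: the probability of the consequence `c` w.r.t. `p`. -/
noncomputable def Pp (satC : I → C → Prop) (p : PMF (I × (V → Bool))) (c : C) : ℝ≥0∞ :=
  ∑' iW : I × (V → Bool), {x : I × (V → Bool) | satC x.1 c}.indicator (⇑p) iW

/-- `P_K(c)`: the infimum of `P_p(c)` over all models `p` of the knowledge base. -/
noncomputable def PK (satA : I → A → Prop) (satC : I → C → Prop) (PB : PMF (V → Bool))
    (𝕊 : Finset (A × (V → Option Bool))) (c : C) : ℝ≥0∞ :=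
  sInf {x : ℝ≥0∞ | ∃ p : PMF (I × (V → Bool)), IsKBModel satA PB 𝕊 p ∧ x = Pp satC p c}

theorem _root_.PMF.map_snd_apply {α β : Type*} (q : PMF (α × β)) (b : β) :
    q.map Prod.snd b = ∑' a, q (a, b) := by
  rw [PMF.map_apply, ENNReal.tsum_prod']
  exact tsum_congr fun a => by simp

section

variable {satA : I → A → Prop} {satC : I → C → Prop} {PB : PMF (V → Bool)}
  {𝕊 : Finset (A × (V → Option Bool))}

theorem Pp_eq_toOuterMeasure (p : PMF (I × (V → Bool))) (c : C) :
    Pp satC p c = p.toOuterMeasure {x | satC x.1 c} :=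
  (PMF.toOuterMeasure_apply _ _).symm

theorem IsKBModel.map_snd {q : PMF (I × (V → Bool))} (hq : IsKBModel satA PB 𝕊 q) :
    q.map Prod.snd = PB :=
  PMF.ext fun W => (q.map_snd_apply W).trans (hq.2.2 W)

theorem IsKBModel.toOuterMeasure_entails_le_Pp {q : PMF (I × (V → Bool))}
    (hq : IsKBModel satA PB 𝕊 q) (c : C) :
    PB.toOuterMeasure {W | Entails satA satC (OW 𝕊 W) c} ≤ Pp satC q c := by
  rw [← hq.map_snd, PMF.toOuterMeasure_map_apply, Pp_eq_toOuterMeasure]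
  exact PMF.toOuterMeasure_mono q fun x ⟨hE, hx⟩ => hE x.1 (hq.2.1 x hx)

theorem exists_isOntModel_satC_iff_entails {O : Set A} (hO : ∃ i, IsOntModel satA O i) (c : C) :
    ∃ i, IsOntModel satA O i ∧ (satC i c ↔ Entails satA satC O c) := by
  by_cases hE : Entails satA satC O c
  · obtain ⟨i, hi⟩ := hO
    exact ⟨i, hi, iff_of_true (hE i hi) hE⟩
  · obtain ⟨i, hi, hic⟩ : ∃ i, IsOntModel satA O i ∧ ¬ satC i c := by
      simpa [Entails] using hE
    exact ⟨i, hi, iff_of_false hic hE⟩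

theorem isKBModel_map_graph [Finite V] {pick : (V → Bool) → I}
    (hpick : ∀ W, IsOntModel satA (OW 𝕊 W) (pick W)) :
    IsKBModel satA PB 𝕊 (PB.map fun W => (pick W, W)) := by
  refine ⟨?_, ?_, fun W => ?_⟩
  · rw [PMF.support_map]
    exact (Set.toFinite _).image _
  · intro x hx
    rw [PMF.support_map] at hx
    obtain ⟨W, -, rfl⟩ := hx
    exact hpick W
  · rw [← PMF.map_snd_apply, PMF.map_comp]
    exact congrArg (· W) PB.map_id

theorem Pp_map_graph (pick : (V → Bool) → I) (c : C) :
    Pp satC (PB.map fun W => (pick W, W)) c = PB.toOuterMeasure {W | satC (pick W) c} := by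
  rw [Pp_eq_toOuterMeasure, PMF.toOuterMeasure_map_apply]
  rfl

end

/-- `P_K(c) = Σ_{O_W ⊨ c} P_B(W)`. -/
theorem probabilistic_entailment [Fintype V]
    (satA : I → A → Prop) (satC : I → C → Prop)
    (PB : PMF (V → Bool)) (𝕊 : Finset (A × (V → Option Bool))) (c : C)
    (hmod : ∀ W : V → Bool, ∃ i : I, IsOntModel satA (OW 𝕊 W) i) :
    PK satA satC PB 𝕊 c
      = ∑' W : V → Bool,
          {W : V → Bool | Entails satA satC (OW 𝕊 W) c}.indicator (⇑PB) W := by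
  rw [← PMF.toOuterMeasure_apply]
  choose pick hpick hpick_iff using fun W => exists_isOntModel_satC_iff_entails (hmod W) c
  refine le_antisymm (sInf_le ⟨_, isKBModel_map_graph hpick, ?_⟩) (le_sInf ?_)
  · rw [Pp_map_graph]
    exact congrArg PB.toOuterMeasure (Set.ext hpick_iff).symm
  · rintro _ ⟨q, hq, rfl⟩
    exact hq.toOuterMeasure_entails_le_Pp c

end BL
end

section
/- If φ is a context formula for c with respect to 𝕊, then for every t ≥ 1 the time-bounded probability satisfies P_K(c[1:t]) = Σ over paths W : Fin t → (V → Bool) such that W i satisfies φ for at least one i, of π_t(W). -/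
/-!
A step model satisfies `c` at step `s` whenever `O_{W_s} ⊨ c`, i.e. whenever `φ (W_s)`, and its
path marginal is `π_t`; so its probability of `c[1:t]` is at least the `π_t`-mass of the paths
hitting `φ`. Conversely, pick for every world `W` a model of `O_W` that falsifies `c` unless
`O_W ⊨ c`; attaching these models stepwise to paths drawn from `π_t` gives a step model
attaining that bound.
-/

open scoped ENNReal

namespace DBL

variable {I A C V : Type*}

/-- A world `W` satisfies the context `κ` if it agrees with `κ` wherever it is defined. -/
def SatCtx (W : V → Bool) (κ : V → Option Bool) : Prop :=
  ∀ v b, κ v = some b → W v = b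

/-- The ontology induced by the world `W` from the `V`-ontology `𝕊`. -/
def OW (𝕊 : Finset (A × (V → Option Bool))) (W : V → Bool) : Set A :=
  {α | ∃ κ, (α, κ) ∈ 𝕊 ∧ SatCtx W κ}

/-- `i` is a model of the ontology `O`. -/
def IsOntModel (satA : I → A → Prop) (O : Set A) (i : I) : Prop :=
  ∀ α ∈ O, satA i α

/-- The ontology `O` entails the consequence `c`. -/
def Entails (satA : I → A → Prop) (satC : I → C → Prop) (O : Set A) (c : C) : Prop :=
  ∀ i : I, IsOntModel satA O i → satC i c

/-- The `t`-step path distribution of the Markov chain with initial distribution `μ` and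
transition kernel `T`: `π_t(W) = μ(W 0) · ∏_{i < t-1} T(W i)(W (i+1))`. -/
noncomputable def pathProb {S : Type*} (μ : PMF S) (T : S → PMF S)
    (t : ℕ) (W : Fin t → S) : ℝ≥0∞ :=
  if h : 0 < t then
    μ (W ⟨0, h⟩) * ∏ i : Fin (t - 1),
      T (W ⟨(i : ℕ), by have := i.2; omega⟩) (W ⟨(i : ℕ) + 1, by have := i.2; omega⟩)
  else 1

/-- A `t`-step probabilistic interpretation `q` (a finitely supported PMF on pairs of a
tuple of interpretations and a path of worlds) is a `t`-step model of `((μ, T), 𝕊)`. -/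
def IsStepModel (satA : I → A → Prop) (μ : PMF (V → Bool))
    (T : (V → Bool) → PMF (V → Bool)) (𝕊 : Finset (A × (V → Option Bool))) (t : ℕ)
    (q : PMF ((Fin t → I) × (Fin t → (V → Bool)))) : Prop :=
  q.support.Finite ∧
    (∀ iw ∈ q.support, ∀ s : Fin t, IsOntModel satA (OW 𝕊 (iw.2 s)) (iw.1 s)) ∧
    ∀ W : Fin t → (V → Bool), ∑' i : Fin t → I, q (i, W) = pathProb μ T t W

/-- `P_q(c[1:t])`: the `q`-probability that `c` is observed at some step `s < t`. -/
noncomputable def Pqt (satC : I → C → Prop) (t : ℕ)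
    (q : PMF ((Fin t → I) × (Fin t → (V → Bool)))) (c : C) : ℝ≥0∞ :=
  ∑' iw : (Fin t → I) × (Fin t → (V → Bool)),
    {x : (Fin t → I) × (Fin t → (V → Bool)) | ∃ s : Fin t, satC (x.1 s) c}.indicator (⇑q) iw

/-- `P_K(c[1:t])`: the infimum of `P_q(c[1:t])` over all `t`-step models `q` of the KB. -/
noncomputable def PKbound (satA : I → A → Prop) (satC : I → C → Prop)
    (μ : PMF (V → Bool)) (T : (V → Bool) → PMF (V → Bool))
    (𝕊 : Finset (A × (V → Option Bool))) (c : C) (t : ℕ) : ℝ≥0∞ :=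
  sInf {x : ℝ≥0∞ | ∃ q : PMF ((Fin t → I) × (Fin t → (V → Bool))),
    IsStepModel satA μ T 𝕊 t q ∧ x = Pqt satC t q c}

lemma pathProb_one {S : Type*} (μ : PMF S) (T : S → PMF S) (W : Fin 1 → S) :
    pathProb μ T 1 W = μ (W 0) := by
  simp [pathProb]

lemma pathProb_snoc {S : Type*} (μ : PMF S) (T : S → PMF S) (n : ℕ) (W : Fin (n + 2) → S) :
    pathProb μ T (n + 2) W
      = pathProb μ T (n + 1) (Fin.init W)
        * T (W (Fin.last n).castSucc) (W (Fin.last (n + 1))) := by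
  rw [pathProb, pathProb, dif_pos n.succ_pos, dif_pos (n + 1).succ_pos, mul_assoc]
  exact congrArg _ (Fin.prod_univ_castSucc (n := n) _)

lemma _root_.PMF.sum_coe_eq_one {α : Type*} [Fintype α] (p : PMF α) : ∑ a, p a = 1 := by
  rw [← tsum_fintype (L := SummationFilter.unconditional _)]
  exact p.tsum_coe

lemma sum_pathProb {S : Type*} [Fintype S] (μ : PMF S) (T : S → PMF S) :
    ∀ t, ∑ W : Fin t → S, pathProb μ T t W = 1
  | 0 => by simp [pathProb]
  | 1 => by
    rw [← (Equiv.funUnique (Fin 1) S).symm.sum_comp]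
    simpa [pathProb_one] using μ.sum_coe_eq_one
  | n + 2 => by
    rw [← (Fin.snocEquiv fun _ => S).sum_comp, Fintype.sum_prod_type_right]
    simp only [Fin.snocEquiv, Equiv.coe_fn_mk, pathProb_snoc, Fin.init_snoc, Fin.snoc_last,
      Fin.snoc_castSucc, ← Finset.mul_sum, PMF.sum_coe_eq_one, mul_one]
    exact sum_pathProb μ T (n + 1)

noncomputable def pathPMF {S : Type*} [Fintype S] (μ : PMF S) (T : S → PMF S) (t : ℕ) :
    PMF (Fin t → S) :=
  PMF.ofFintype (pathProb μ T t) (sum_pathProb μ T t)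

lemma toOuterMeasure_pathPMF {S : Type*} [Fintype S] (μ : PMF S) (T : S → PMF S) (t : ℕ)
    (Φ : Set (Fin t → S)) :
    (pathPMF μ T t).toOuterMeasure Φ = ∑' W, Φ.indicator (pathProb μ T t) W :=
  PMF.toOuterMeasure_apply _ _

lemma _root_.PMF.map_snd_apply_s6 {α β : Type*} (q : PMF (α × β)) (b : β) :
    q.map Prod.snd b = ∑' a, q (a, b) := by
  classical
  rw [PMF.map_apply, ENNReal.tsum_prod']
  exact tsum_congr fun a => tsum_ite_eq' b _

lemma _root_.PMF.toOuterMeasure_preimage_snd {α β : Type*} (q : PMF (α × β)) (s : Set β) :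
    q.toOuterMeasure (Prod.snd ⁻¹' s) = ∑' b, s.indicator (fun b => ∑' a, q (a, b)) b := by
  rw [← PMF.toOuterMeasure_map_apply, PMF.toOuterMeasure_apply,
    show ⇑(q.map Prod.snd) = _ from funext q.map_snd_apply_s6]

lemma Pqt_eq_toOuterMeasure (satC : I → C → Prop) (t : ℕ)
    (q : PMF ((Fin t → I) × (Fin t → (V → Bool)))) (c : C) :
    Pqt satC t q c = q.toOuterMeasure {x | ∃ s, satC (x.1 s) c} :=
  (PMF.toOuterMeasure_apply _ _).symm

lemma exists_model_satC_imp_entails (satA : I → A → Prop) (satC : I → C → Prop) (c : C)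
    {O : Set A} (hO : ∃ i, IsOntModel satA O i) :
    ∃ i, IsOntModel satA O i ∧ (satC i c → Entails satA satC O c) := by
  by_cases hc : Entails satA satC O c
  · obtain ⟨i, hi⟩ := hO
    exact ⟨i, hi, fun _ => hc⟩
  · simp only [Entails, not_forall] at hc
    obtain ⟨i, hi, hic⟩ := hc
    exact ⟨i, hi, fun h => absurd h hic⟩

section StepModel

variable {satA : I → A → Prop} {satC : I → C → Prop} {μ : PMF (V → Bool)}
  {T : (V → Bool) → PMF (V → Bool)} {𝕊 : Finset (A × (V → Option Bool))} {t : ℕ}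

lemma IsStepModel.toOuterMeasure_preimage_snd {q : PMF ((Fin t → I) × (Fin t → (V → Bool)))}
    (hq : IsStepModel satA μ T 𝕊 t q) (Φ : Set (Fin t → (V → Bool))) :
    q.toOuterMeasure (Prod.snd ⁻¹' Φ) = ∑' W, Φ.indicator (pathProb μ T t) W := by
  rw [q.toOuterMeasure_preimage_snd, show (fun W => ∑' i, q (i, W)) = _ from funext hq.2.2]

lemma IsStepModel.tsum_indicator_pathProb_le_Pqt
    {q : PMF ((Fin t → I) × (Fin t → (V → Bool)))} (hq : IsStepModel satA μ T 𝕊 t q)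
    {c : C} {φ : (V → Bool) → Prop} (hφ : ∀ W, φ W → Entails satA satC (OW 𝕊 W) c) :
    ∑' W, {W : Fin t → (V → Bool) | ∃ i, φ (W i)}.indicator (pathProb μ T t) W
      ≤ Pqt satC t q c := by
  rw [← hq.toOuterMeasure_preimage_snd, Pqt_eq_toOuterMeasure]
  refine q.toOuterMeasure_mono ?_
  rintro ⟨i, W⟩ ⟨⟨s, hs⟩, hsupp⟩
  exact ⟨s, hφ _ hs _ (hq.2.1 _ hsupp s)⟩

variable [Fintype V] [DecidableEq V]

noncomputable def selectionModel (μ : PMF (V → Bool)) (T : (V → Bool) → PMF (V → Bool))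
    (g : (V → Bool) → I) (t : ℕ) : PMF ((Fin t → I) × (Fin t → (V → Bool))) :=
  (pathPMF μ T t).map fun W => (g ∘ W, W)

lemma isStepModel_selectionModel {g : (V → Bool) → I}
    (hg : ∀ W, IsOntModel satA (OW 𝕊 W) (g W)) :
    IsStepModel satA μ T 𝕊 t (selectionModel μ T g t) := by
  refine ⟨?_, ?_, fun W => ?_⟩
  · rw [selectionModel, PMF.support_map]
    exact Set.toFinite _
  · rw [selectionModel, PMF.support_map]
    rintro _ ⟨W, -, rfl⟩ s
    exact hg (W s)
  · rw [← PMF.map_snd_apply_s6, selectionModel, PMF.map_comp]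
    exact congrFun (congrArg DFunLike.coe (PMF.map_id _)) W

lemma Pqt_selectionModel_le {g : (V → Bool) → I} {c : C} {φ : (V → Bool) → Prop}
    (hg : ∀ W, satC (g W) c → φ W) :
    Pqt satC t (selectionModel μ T g t) c
      ≤ ∑' W, {W : Fin t → (V → Bool) | ∃ i, φ (W i)}.indicator (pathProb μ T t) W := by
  rw [Pqt_eq_toOuterMeasure, selectionModel, PMF.toOuterMeasure_map_apply,
    ← toOuterMeasure_pathPMF]
  exact PMF.toOuterMeasure_mono _ fun W ⟨⟨s, hs⟩, _⟩ => ⟨s, hg _ hs⟩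

end StepModel

theorem time_bounded_entailment_general [Fintype V]
    (satA : I → A → Prop) (satC : I → C → Prop)
    (μ : PMF (V → Bool)) (T : (V → Bool) → PMF (V → Bool))
    (𝕊 : Finset (A × (V → Option Bool))) (c : C)
    (φ : (V → Bool) → Prop)
    (hφ : ∀ W : V → Bool, Entails satA satC (OW 𝕊 W) c ↔ φ W)
    (t : ℕ)
    (hmod : ∀ W : V → Bool, ∃ i : I, IsOntModel satA (OW 𝕊 W) i) :
    PKbound satA satC μ T 𝕊 c t
      = ∑' W : Fin t → (V → Bool),
          {W : Fin t → (V → Bool) | ∃ i : Fin t, φ (W i)}.indicator (pathProb μ T t) W := by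
  classical
  choose g hg_model hg_entails using fun W => exists_model_satC_imp_entails satA satC c (hmod W)
  refine le_antisymm ?_ (le_sInf ?_)
  · exact sInf_le_of_le ⟨_, isStepModel_selectionModel hg_model, rfl⟩
      (Pqt_selectionModel_le fun W h => (hφ W).1 (hg_entails W h))
  · rintro _ ⟨q, hq, rfl⟩
    exact hq.tsum_indicator_pathProb_le_Pqt fun W => (hφ W).2

/-- if `φ` is a context formula for `c` w.r.t. `𝕊`, then for every `t ≥ 1`,
`P_K(c[1:t]) = Σ over paths W hitting φ of π_t(W)`. -/
theorem time_bounded_entailment [Fintype V]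
    (satA : I → A → Prop) (satC : I → C → Prop)
    (μ : PMF (V → Bool)) (T : (V → Bool) → PMF (V → Bool))
    (𝕊 : Finset (A × (V → Option Bool))) (c : C)
    (φ : (V → Bool) → Prop)
    (hφ : ∀ W : V → Bool, Entails satA satC (OW 𝕊 W) c ↔ φ W)
    (t : ℕ) (ht : 1 ≤ t)
    (hmod : ∀ W : V → Bool, ∃ i : I, IsOntModel satA (OW 𝕊 W) i) :
    PKbound satA satC μ T 𝕊 c t
      = ∑' W : Fin t → (V → Bool),
          {W : Fin t → (V → Bool) | ∃ i : Fin t, φ (W i)}.indicator (pathProb μ T t) W :=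
  time_bounded_entailment_general satA satC μ T 𝕊 c φ hφ t hmod

end DBL
end

section
/- If the transition kernel T is irreducible (for all states s, s' there exists n ≥ 1 with T^n(s)(s') > 0) and aperiodic (for every state s there exists N such that T^n(s)(s) > 0 for all n ≥ N), then T has exactly one stationary PMF. -/
open scoped ENNReal

namespace MC

/-- The `n`-step transition kernel, 0-indexed: `nstep T 0 = T¹ = T` and
`nstep T (n+1) = T^{n+2}`, where `T^{n+1}(s) = (T^n(s)).bind T`. -/
noncomputable def nstep {S : Type*} (T : S → PMF S) : ℕ → S → PMF S
  | 0 => T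
  | n + 1 => fun s => (nstep T n s).bind T

/-- A PMF `ν` on `S` is stationary for the kernel `T` if `Σ_s ν(s)·T(s)(s') = ν(s')`. -/
def Stationary {S : Type*} (T : S → PMF S) (ν : PMF S) : Prop :=
  ∀ s' : S, ∑' s : S, ν s * T s s' = ν s'

/-- `T` is irreducible: for all states `s, s'` there is `n ≥ 1` with `T^n(s)(s') > 0`. -/
def Irreducible {S : Type*} (T : S → PMF S) : Prop :=
  ∀ s s' : S, ∃ n : ℕ, 0 < nstep T n s s'

/-- `T` is aperiodic: for every state `s` there is `N` with `T^n(s)(s) > 0` for all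
`n ≥ 1` with `n ≥ N`. -/
def Aperiodic {S : Type*} (T : S → PMF S) : Prop :=
  ∀ s : S, ∃ N : ℕ, ∀ n : ℕ, N ≤ n → 0 < nstep T n s s

end MC

/-!
Every finite stochastic matrix `M` has a stationary law: since `M 1 = 1`, `1` is an eigenvalue
of `M`, so `v M = v` for some `v ≠ 0`. Then `|v| M ≥ |v M| = |v|` entrywise
and both sides have the same total mass, so `|v| M = |v|`, and `|v|` normalises to a stationary law.

For uniqueness, irreducibility and aperiodicity give an `m` with `T^m` entrywise positive, and
every stationary law of `T` is stationary for `T^m`. If all entries of a stochastic matrix are at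
least `δ > 0`, it shrinks the `ℓ¹` norm of zero-sum vectors by the factor `1 - |S| δ < 1`
(Doeblin), so the difference of two stationary laws vanishes.
-/

namespace Matrix

variable {n : Type*} [Fintype n] {M : Matrix n n ℝ} {v : n → ℝ}

lemma sum_vecMul_of_mulVec_one (hM : M *ᵥ 1 = 1) (v : n → ℝ) :
    ∑ j, (v ᵥ* M) j = ∑ i, v i := by
  rw [← dotProduct_one, ← dotProduct_one, ← dotProduct_mulVec, hM]

lemma exists_vecMul_eq_self_of_mulVec_one [DecidableEq n] [Nonempty n] (hM : M *ᵥ 1 = 1) :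
    ∃ v ≠ 0, v ᵥ* M = v := by
  have hdet : (M - 1).det = 0 :=
    exists_mulVec_eq_zero_iff.1 ⟨1, one_ne_zero, by rw [sub_mulVec, hM, one_mulVec, sub_self]⟩
  obtain ⟨v, hv, hvM⟩ := exists_vecMul_eq_zero_iff.2 hdet
  exact ⟨v, hv, by rwa [vecMul_sub, vecMul_one, sub_eq_zero] at hvM⟩

lemma abs_vecMul_eq_of_mem_rowStochastic [DecidableEq n] (hM : M ∈ rowStochastic ℝ n)
    (hv : v ᵥ* M = v) : |v| ᵥ* M = |v| := by
  have hle : ∀ j, |v| j ≤ (|v| ᵥ* M) j := fun j => by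
    calc |v| j = |(v ᵥ* M) j| := by rw [hv, Pi.abs_apply]
      _ ≤ ∑ i, |v i * M i j| := Finset.abs_sum_le_sum_abs _ _
      _ = (|v| ᵥ* M) j := by
        simp only [vecMul, dotProduct, Pi.abs_apply, abs_mul, abs_of_nonneg (hM.1 _ _)]
  have hsum : ∑ j, (|v| ᵥ* M) j = ∑ j, |v| j := sum_vecMul_of_mulVec_one hM.2 _
  funext j
  exact ((Finset.sum_eq_sum_iff_of_le fun j _ => hle j).1 hsum.symm j (Finset.mem_univ j)).symm

lemma exists_mem_stdSimplex_vecMul_eq_self [DecidableEq n] [Nonempty n]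
    (hM : M ∈ rowStochastic ℝ n) : ∃ w ∈ stdSimplex ℝ n, w ᵥ* M = w := by
  obtain ⟨v, hv0, hv⟩ := exists_vecMul_eq_self_of_mulVec_one hM.2
  have hpos : 0 < ∑ i, |v i| := by
    obtain ⟨i, hi⟩ := Function.ne_iff.1 hv0
    exact Finset.sum_pos' (fun i _ => abs_nonneg _) ⟨i, Finset.mem_univ i, abs_pos.2 hi⟩
  refine ⟨(∑ i, |v i|)⁻¹ • |v|, ⟨fun i => ?_, ?_⟩, ?_⟩
  · exact mul_nonneg (inv_nonneg.2 hpos.le) (abs_nonneg _)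
  · simp only [Pi.smul_apply, Pi.abs_apply, smul_eq_mul, ← Finset.mul_sum]
    exact inv_mul_cancel₀ hpos.ne'
  · rw [smul_vecMul, abs_vecMul_eq_of_mem_rowStochastic hM hv]

lemma sum_abs_vecMul_le_of_le (hM : M *ᵥ 1 = 1) {δ : ℝ} (hδ : ∀ i j, δ ≤ M i j)
    (hv : ∑ i, v i = 0) :
    ∑ j, |(v ᵥ* M) j| ≤ (1 - Fintype.card n * δ) * ∑ i, |v i| := by
  have hrow : ∀ i, ∑ j, M i j = 1 := fun i => by
    simpa [mulVec, dotProduct] using congrFun hM i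
  -- Since `v` has zero sum, the constant part `δ` of each column of `M` does not contribute.
  have hshift : ∀ j, (v ᵥ* M) j = ∑ i, v i * (M i j - δ) := fun j => by
    simp only [vecMul, dotProduct, mul_sub, Finset.sum_sub_distrib, ← Finset.sum_mul, hv,
      zero_mul, sub_zero]
  calc ∑ j, |(v ᵥ* M) j| ≤ ∑ j, ∑ i, |v i| * (M i j - δ) := by
        refine Finset.sum_le_sum fun j _ => ?_
        rw [hshift]
        refine (Finset.abs_sum_le_sum_abs _ _).trans_eq (Finset.sum_congr rfl fun i _ => ?_)
        rw [abs_mul, abs_of_nonneg (sub_nonneg.2 (hδ i j))]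
    _ = (1 - Fintype.card n * δ) * ∑ i, |v i| := by
        rw [Finset.sum_comm, Finset.mul_sum]
        refine Finset.sum_congr rfl fun i _ => ?_
        rw [← Finset.mul_sum, Finset.sum_sub_distrib, hrow, Finset.sum_const, Finset.card_univ,
          nsmul_eq_mul, mul_comm]

lemma eq_zero_of_vecMul_eq_self_of_pos (hM : M *ᵥ 1 = 1) (hpos : ∀ i j, 0 < M i j)
    (hv : v ᵥ* M = v) (hsum : ∑ i, v i = 0) : v = 0 := by
  rcases isEmpty_or_nonempty n with hn | hn
  · exact Subsingleton.elim _ _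
  obtain ⟨⟨i₀, j₀⟩, hmin⟩ := Finite.exists_min fun p : n × n => M p.1 p.2
  have hcontr := sum_abs_vecMul_le_of_le hM (fun i j => hmin (i, j)) hsum
  rw [hv] at hcontr
  have hgap : 0 < Fintype.card n * M i₀ j₀ :=
    mul_pos (by exact_mod_cast Fintype.card_pos) (hpos i₀ j₀)
  have hnonneg : 0 ≤ ∑ i, |v i| := Finset.sum_nonneg fun i _ => abs_nonneg _
  have hzero : ∑ i, |v i| = 0 := le_antisymm (by nlinarith) hnonneg
  funext i
  exact abs_eq_zero.1 ((Finset.sum_eq_zero_iff_of_nonneg fun i _ => abs_nonneg _).1 hzero i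
    (Finset.mem_univ i))

end Matrix

namespace PMF

variable {α : Type*}

lemma toReal_comp_injective : Function.Injective fun p : PMF α => ENNReal.toReal ∘ p :=
  fun p q h => PMF.ext fun a =>
    (ENNReal.toReal_eq_toReal_iff' (p.apply_ne_top a) (q.apply_ne_top a)).1 (congrFun h a)

variable [Fintype α]

lemma sum_toReal (p : PMF α) : ∑ a, (p a).toReal = 1 := by
  rw [← ENNReal.toReal_sum fun a _ => p.apply_ne_top a, ← tsum_fintype (L := .unconditional _),
    p.tsum_coe, ENNReal.toReal_one]

lemma exists_toReal_comp_eq {w : α → ℝ} (hw : w ∈ stdSimplex ℝ α) :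
    ∃ p : PMF α, ENNReal.toReal ∘ p = w := by
  refine ⟨ofFintype (fun a => ENNReal.ofReal (w a)) ?_,
    funext fun a => ENNReal.toReal_ofReal (hw.1 a)⟩
  rw [← ENNReal.ofReal_sum_of_nonneg fun a _ => hw.1 a, hw.2, ENNReal.ofReal_one]

end PMF

namespace MC

open Matrix

section

variable {S : Type*} {T : S → PMF S}

lemma nstep_add_succ (T : S → PMF S) (a b : ℕ) (s : S) :
    nstep T (a + b + 1) s = (nstep T a s).bind (nstep T b) := by
  induction b with
  | zero => rfl
  | succ b ih => exact (congrArg (·.bind T) ih).trans (PMF.bind_bind _ _ _)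

lemma nstep_add_succ_pos {a b : ℕ} {s u s' : S} (h₁ : 0 < nstep T a s u)
    (h₂ : 0 < nstep T b u s') : 0 < nstep T (a + b + 1) s s' := by
  simp only [PMF.apply_pos_iff, nstep_add_succ, PMF.mem_support_bind_iff] at h₁ h₂ ⊢
  exact ⟨u, h₁, h₂⟩

lemma exists_forall_nstep_pos [Finite S] (hirr : Irreducible T) (haper : Aperiodic T) :
    ∃ m, ∀ s s', 0 < nstep T m s s' := by
  choose n hn using hirr
  choose N hN using haper
  obtain ⟨M, hM⟩ := Finite.exists_le fun p : S × S => n p.1 p.2 + N p.2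
  refine ⟨M + 1, fun s s' => ?_⟩
  have hle : n s s' + N s' ≤ M := hM (s, s')
  rw [show M + 1 = n s s' + (M - n s s') + 1 by omega]
  exact nstep_add_succ_pos (hn s s') (hN s' _ (by omega))

lemma stationary_iff_bind_eq {ν : PMF S} : Stationary T ν ↔ ν.bind T = ν := by
  simp only [Stationary, PMF.ext_iff, PMF.bind_apply]

lemma Stationary.nstep {ν : PMF S} (h : Stationary T ν) (n : ℕ) : Stationary (nstep T n) ν := by
  rw [stationary_iff_bind_eq] at h ⊢
  induction n with
  | zero => exact h
  | succ n ih => exact (PMF.bind_bind _ _ _).symm.trans ((congrArg (·.bind T) ih).trans h)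

def transitionMatrix (T : S → PMF S) : Matrix S S ℝ := fun s s' => (T s s').toReal

variable [Fintype S]

lemma transitionMatrix_mem_rowStochastic [DecidableEq S] (T : S → PMF S) :
    transitionMatrix T ∈ rowStochastic ℝ S :=
  mem_rowStochastic_iff_sum.2 ⟨fun _ _ => ENNReal.toReal_nonneg, fun s => (T s).sum_toReal⟩

lemma stationary_iff_vecMul {ν : PMF S} :
    Stationary T ν ↔ (ENNReal.toReal ∘ ν) ᵥ* transitionMatrix T = ENNReal.toReal ∘ ν := by
  simp only [Stationary, funext_iff, tsum_fintype]
  refine forall_congr' fun s' => ?_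
  have hfin : ∀ s ∈ Finset.univ, ν s * T s s' ≠ ∞ := fun s _ =>
    ENNReal.mul_ne_top (ν.apply_ne_top s) ((T s).apply_ne_top s')
  rw [← ENNReal.toReal_eq_toReal_iff' (ENNReal.sum_ne_top.2 hfin) (ν.apply_ne_top s'),
    ENNReal.toReal_sum hfin]
  simp only [ENNReal.toReal_mul, vecMul, dotProduct, Function.comp, transitionMatrix]

lemma exists_stationary [Nonempty S] (T : S → PMF S) : ∃ ν, Stationary T ν := by
  classical
  obtain ⟨w, hw, hwT⟩ :=
    exists_mem_stdSimplex_vecMul_eq_self (transitionMatrix_mem_rowStochastic T)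
  obtain ⟨ν, rfl⟩ := PMF.exists_toReal_comp_eq hw
  exact ⟨ν, stationary_iff_vecMul.2 hwT⟩

lemma Stationary.eq_of_forall_pos {μ ν : PMF S} (hT : ∀ s s', 0 < T s s')
    (hμ : Stationary T μ) (hν : Stationary T ν) : μ = ν := by
  classical
  refine PMF.toReal_comp_injective (sub_eq_zero.1 ?_)
  dsimp only
  refine eq_zero_of_vecMul_eq_self_of_pos (transitionMatrix_mem_rowStochastic T).2
    (fun s s' => ENNReal.toReal_pos (hT s s').ne' ((T s).apply_ne_top s')) ?_ ?_
  · rw [sub_vecMul, stationary_iff_vecMul.1 hμ, stationary_iff_vecMul.1 hν]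
  · simp only [Pi.sub_apply, Finset.sum_sub_distrib, Function.comp_apply, PMF.sum_toReal,
      sub_self]

end

/-- an irreducible and aperiodic kernel on a finite state space has
exactly one stationary PMF. -/
theorem unique_stationary_of_irreducible_aperiodic {S : Type*} [Fintype S] [Nonempty S]
    (T : S → PMF S) (hirr : Irreducible T) (haper : Aperiodic T) :
    ∃! ν : PMF S, Stationary T ν := by
  obtain ⟨m, hm⟩ := exists_forall_nstep_pos hirr haper
  obtain ⟨ν, hν⟩ := exists_stationary T
  exact ⟨ν, hν, fun μ hμ => (hμ.nstep m).eq_of_forall_pos hm (hν.nstep m)⟩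

end MC
end
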